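/- Let A ∈ ℂ^{n×n}, B ∈ ℂ^{n×m}, C ∈ ℂ^{p×n}, D ∈ ℂ^{p×m}, let γ > 0 be real, let P be an n×n complex Hermitian matrix, let Ψ_i, Ψ_j be 2×2 complex Hermitian matrices, and let Q_i, Q_j be n×n complex Hermitian matrices, and suppose the Hermitian matrix M := [A B; I 0]* (Φ ⊗ P + Ψ_i ⊗ Q_i − Ψ_j ⊗ Q_j) [A B; I 0] + [C D; 0 I]* [[I_p, 0], [0, −γ²I_m]] [C D; 0 I] is negative definite. Let a ≤ b, let x : [a, b] → ℂⁿ be continuously differentiable and d : [a, b] → ℂᵐ be continuous with x'(t) = Ax(t) + Bd(t) for all t ∈ [a, b], and set z(t) := Cx(t) + Dd(t). Then x(b)*Px(b) − x(a)*Px(a) + ∫_a^b (z(t)*z(t) − γ² d(t)*d(t)) dt + ∫_a^b (q_{Ψ_i,Q_i}(x'(t), x(t)) − q_{Ψ_j,Q_j}(x'(t), x(t))) dt ≤ 0. -/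

import Mathlib

open Matrix Complex MeasureTheory
open scoped ComplexOrder

/-- The frequency-weighted quadratic form `q_{Ψ,Q}(u, v) = (u,v)* (Ψ ⊗ Q) (u,v)`. -/
noncomputable def qForm {n : ℕ} (Ψ : Matrix (Fin 2) (Fin 2) ℂ)
    (Q : Matrix (Fin n) (Fin n) ℂ) (u v : Fin n → ℂ) : ℂ :=
  Ψ 0 0 * (star u ⬝ᵥ Q.mulVec u) + Ψ 0 1 * (star u ⬝ᵥ Q.mulVec v)
    + Ψ 1 0 * (star v ⬝ᵥ Q.mulVec u) + Ψ 1 1 * (star v ⬝ᵥ Q.mulVec v)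

/-- The Kronecker product `Ψ ⊗ Q` of a 2×2 matrix with an n×n matrix, written
as a 2×2 block matrix. -/
noncomputable def kron2 {n : ℕ} (Ψ : Matrix (Fin 2) (Fin 2) ℂ)
    (Q : Matrix (Fin n) (Fin n) ℂ) : Matrix (Fin n ⊕ Fin n) (Fin n ⊕ Fin n) ℂ :=
  Matrix.fromBlocks (Ψ 0 0 • Q) (Ψ 0 1 • Q) (Ψ 1 0 • Q) (Ψ 1 1 • Q)

/-- `Φ = [[0, 1], [1, 0]]`. -/
noncomputable def PhiMat : Matrix (Fin 2) (Fin 2) ℂ := !![0, 1; 1, 0]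

/-- A complex matrix is negative definite if it is Hermitian and `v*Mv < 0` for
all `v ≠ 0`. -/
def NegDefinite {k : Type*} [Fintype k] (M : Matrix k k ℂ) : Prop :=
  M.IsHermitian ∧ ∀ v : k → ℂ, v ≠ 0 → (star v ⬝ᵥ M.mulVec v).re < 0

lemma star_sum_elim {n m : ℕ} (u : Fin n → ℂ) (v : Fin m → ℂ) :
    star (Sum.elim u v) = Sum.elim (star u) (star v) := by
  funext i; cases i <;> rfl

lemma quad_sandwich {k l : Type*} [Fintype k] [Fintype l]
    (S : Matrix k l ℂ) (N : Matrix k k ℂ) (w : l → ℂ) :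
    star w ⬝ᵥ (Sᴴ * N * S).mulVec w = star (S.mulVec w) ⬝ᵥ N.mulVec (S.mulVec w) := by
  rw [← Matrix.mulVec_mulVec, ← Matrix.mulVec_mulVec, Matrix.dotProduct_mulVec,
    ← Matrix.star_mulVec]

lemma kron2_quad {n : ℕ} (Ψ : Matrix (Fin 2) (Fin 2) ℂ) (Q : Matrix (Fin n) (Fin n) ℂ)
    (u v : Fin n → ℂ) :
    star (Sum.elim u v) ⬝ᵥ (kron2 Ψ Q).mulVec (Sum.elim u v) = qForm Ψ Q u v := by
  simp [kron2, qForm, Matrix.fromBlocks_mulVec, star_sum_elim,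
    sumElim_dotProduct_sumElim, Matrix.smul_mulVec,
    dotProduct_add, dotProduct_smul, smul_eq_mul]
  ring

lemma qForm_Phi {n : ℕ} (P : Matrix (Fin n) (Fin n) ℂ) (u v : Fin n → ℂ) :
    qForm PhiMat P u v = star u ⬝ᵥ P.mulVec v + star v ⬝ᵥ P.mulVec u := by
  simp [qForm, PhiMat]

lemma Mquad {n m p : ℕ}
    (A : Matrix (Fin n) (Fin n) ℂ) (B : Matrix (Fin n) (Fin m) ℂ)
    (C : Matrix (Fin p) (Fin n) ℂ) (D : Matrix (Fin p) (Fin m) ℂ)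
    (γ : ℝ) (P Qi Qj : Matrix (Fin n) (Fin n) ℂ) (Ψi Ψj : Matrix (Fin 2) (Fin 2) ℂ)
    (xv : Fin n → ℂ) (dv : Fin m → ℂ) :
    star (Sum.elim xv dv) ⬝ᵥ
      ((Matrix.fromBlocks A B (1 : Matrix (Fin n) (Fin n) ℂ) (0 : Matrix (Fin n) (Fin m) ℂ))ᴴ
          * (kron2 PhiMat P + kron2 Ψi Qi - kron2 Ψj Qj)
          * Matrix.fromBlocks A B (1 : Matrix (Fin n) (Fin n) ℂ) (0 : Matrix (Fin n) (Fin m) ℂ)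
        + (Matrix.fromBlocks C D (0 : Matrix (Fin m) (Fin n) ℂ) (1 : Matrix (Fin m) (Fin m) ℂ))ᴴ
            * Matrix.fromBlocks (1 : Matrix (Fin p) (Fin p) ℂ) (0 : Matrix (Fin p) (Fin m) ℂ)
                (0 : Matrix (Fin m) (Fin p) ℂ) (-((γ : ℂ) ^ 2) • (1 : Matrix (Fin m) (Fin m) ℂ))
            * Matrix.fromBlocks C D (0 : Matrix (Fin m) (Fin n) ℂ) (1 : Matrix (Fin m) (Fin m) ℂ)).mulVec
        (Sum.elim xv dv)
    = (star (A.mulVec xv + B.mulVec dv) ⬝ᵥ P.mulVec xv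
        + star xv ⬝ᵥ P.mulVec (A.mulVec xv + B.mulVec dv))
      + (qForm Ψi Qi (A.mulVec xv + B.mulVec dv) xv
         - qForm Ψj Qj (A.mulVec xv + B.mulVec dv) xv)
      + (star (C.mulVec xv + D.mulVec dv) ⬝ᵥ (C.mulVec xv + D.mulVec dv)
         - (γ : ℂ) ^ 2 * (star dv ⬝ᵥ dv)) := by
  set u := A.mulVec xv + B.mulVec dv with hu
  set z := C.mulVec xv + D.mulVec dv with hz
  have hS1 : (Matrix.fromBlocks A B (1 : Matrix (Fin n) (Fin n) ℂ)
      (0 : Matrix (Fin n) (Fin m) ℂ)).mulVec (Sum.elim xv dv) = Sum.elim u xv := by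
    simp [Matrix.fromBlocks_mulVec, hu]
  have hS2 : (Matrix.fromBlocks C D (0 : Matrix (Fin m) (Fin n) ℂ)
      (1 : Matrix (Fin m) (Fin m) ℂ)).mulVec (Sum.elim xv dv) = Sum.elim z dv := by
    simp [Matrix.fromBlocks_mulVec, hz]
  rw [Matrix.add_mulVec, dotProduct_add, quad_sandwich, quad_sandwich, hS1, hS2]
  rw [Matrix.sub_mulVec, Matrix.add_mulVec, dotProduct_sub, dotProduct_add,
    kron2_quad, kron2_quad, kron2_quad, qForm_Phi]
  have h2 : star (Sum.elim z dv) ⬝ᵥ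
      (Matrix.fromBlocks (1 : Matrix (Fin p) (Fin p) ℂ) (0 : Matrix (Fin p) (Fin m) ℂ)
        (0 : Matrix (Fin m) (Fin p) ℂ)
        (-((γ : ℂ) ^ 2) • (1 : Matrix (Fin m) (Fin m) ℂ))).mulVec (Sum.elim z dv)
      = star z ⬝ᵥ z - (γ : ℂ) ^ 2 * (star dv ⬝ᵥ dv) := by
    simp [Matrix.fromBlocks_mulVec, star_sum_elim, sumElim_dotProduct_sumElim,
      Matrix.neg_mulVec, Matrix.one_mulVec, dotProduct_neg,
      Matrix.smul_mulVec, dotProduct_smul, smul_eq_mul]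
    ring
  rw [h2]; ring

lemma hasDerivWithinAt_quad {n : ℕ} (P : Matrix (Fin n) (Fin n) ℂ)
    {x : ℝ → Fin n → ℂ} {x' : Fin n → ℂ} {s : Set ℝ} {t : ℝ}
    (hx : HasDerivWithinAt x x' s t) :
    HasDerivWithinAt (fun τ => star (x τ) ⬝ᵥ P.mulVec (x τ))
      (star x' ⬝ᵥ P.mulVec (x t) + star (x t) ⬝ᵥ P.mulVec x') s t := by
  have h := hasDerivWithinAt_pi.mp hx
  have h2 : HasDerivWithinAt (fun τ => ∑ i, ∑ j, star (x τ i) * (P i j * x τ j))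
      (∑ i, ∑ j, (star (x' i) * (P i j * x t j) + star (x t i) * (P i j * x' j))) s t :=
    HasDerivWithinAt.fun_sum fun i _ => HasDerivWithinAt.fun_sum fun j _ =>
      (h i).star.mul ((h j).const_mul (P i j))
  have e1 : (fun τ => star (x τ) ⬝ᵥ P.mulVec (x τ))
      = fun τ => ∑ i, ∑ j, star (x τ i) * (P i j * x τ j) := by
    funext τ; simp [dotProduct, Matrix.mulVec, Finset.mul_sum]
  have e2 : star x' ⬝ᵥ P.mulVec (x t) + star (x t) ⬝ᵥ P.mulVec x'
      = ∑ i, ∑ j, (star (x' i) * (P i j * x t j) + star (x t i) * (P i j * x' j)) := by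
    simp [dotProduct, Matrix.mulVec, Finset.mul_sum, Finset.sum_add_distrib]
  rw [e1, e2]; exact h2

lemma continuousOn_mulVec {k k' : Type*} [Fintype k'] (N : Matrix k k' ℂ)
    {f : ℝ → k' → ℂ} {s : Set ℝ} (hf : ContinuousOn f s) :
    ContinuousOn (fun t => N.mulVec (f t)) s := by
  refine continuousOn_pi.mpr fun i => ?_
  simp only [Matrix.mulVec, dotProduct]
  exact continuousOn_finset_sum _ fun j _ =>
    continuousOn_const.mul ((continuous_apply j).comp_continuousOn hf)

lemma continuousOn_dot {k k' : Type*} [Fintype k] [Fintype k'] (N : Matrix k k' ℂ)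
    {f : ℝ → k → ℂ} {g : ℝ → k' → ℂ} {s : Set ℝ}
    (hf : ContinuousOn f s) (hg : ContinuousOn g s) :
    ContinuousOn (fun t => star (f t) ⬝ᵥ N.mulVec (g t)) s := by
  have e : (fun t => star (f t) ⬝ᵥ N.mulVec (g t))
      = fun t => ∑ i, ∑ j, star (f t i) * (N i j * g t j) := by
    funext τ; simp [dotProduct, Matrix.mulVec, Finset.mul_sum]
  rw [e]
  refine continuousOn_finset_sum _ fun i _ => continuousOn_finset_sum _ fun j _ => ?_
  exact ((continuous_star.comp (continuous_apply i)).comp_continuousOn hf).mul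
    (continuousOn_const.mul ((continuous_apply j).comp_continuousOn hg))

lemma continuousOn_dot' {k : Type*} [Fintype k] [DecidableEq k]
    {f : ℝ → k → ℂ} {s : Set ℝ} (hf : ContinuousOn f s) :
    ContinuousOn (fun t => star (f t) ⬝ᵥ f t) s := by
  have e : (fun t => star (f t) ⬝ᵥ f t)
      = fun t => star (f t) ⬝ᵥ (1 : Matrix k k ℂ).mulVec (f t) := by
    simp [Matrix.one_mulVec]
  rw [e]; exact continuousOn_dot _ hf hf

/-- Integrated dissipation inequality for one active mode: along a trajectory of
`x' = Ax + Bd` on `[a, b]` with output `z = Cx + Dd`, the switched gKYP LMI yields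
`x(b)*Px(b) − x(a)*Px(a) + ∫ (z*z − γ²d*d) + ∫ (q_{Ψ_i,Q_i}(x',x) − q_{Ψ_j,Q_j}(x',x)) ≤ 0`. -/
theorem gKYP_integrated_dissipation {n m p : ℕ}
    (A : Matrix (Fin n) (Fin n) ℂ) (B : Matrix (Fin n) (Fin m) ℂ)
    (C : Matrix (Fin p) (Fin n) ℂ) (D : Matrix (Fin p) (Fin m) ℂ)
    (γ : ℝ) (hγ : 0 < γ)
    (P : Matrix (Fin n) (Fin n) ℂ) (hP : P.IsHermitian)
    (Ψi Ψj : Matrix (Fin 2) (Fin 2) ℂ) (hΨi : Ψi.IsHermitian) (hΨj : Ψj.IsHermitian)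
    (Qi Qj : Matrix (Fin n) (Fin n) ℂ) (hQi : Qi.IsHermitian) (hQj : Qj.IsHermitian)
    (hM : NegDefinite
      ((Matrix.fromBlocks A B (1 : Matrix (Fin n) (Fin n) ℂ) (0 : Matrix (Fin n) (Fin m) ℂ))ᴴ
          * (kron2 PhiMat P + kron2 Ψi Qi - kron2 Ψj Qj)
          * Matrix.fromBlocks A B (1 : Matrix (Fin n) (Fin n) ℂ) (0 : Matrix (Fin n) (Fin m) ℂ)
        + (Matrix.fromBlocks C D (0 : Matrix (Fin m) (Fin n) ℂ) (1 : Matrix (Fin m) (Fin m) ℂ))ᴴ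
            * Matrix.fromBlocks (1 : Matrix (Fin p) (Fin p) ℂ) (0 : Matrix (Fin p) (Fin m) ℂ)
                (0 : Matrix (Fin m) (Fin p) ℂ) (-((γ : ℂ) ^ 2) • (1 : Matrix (Fin m) (Fin m) ℂ))
            * Matrix.fromBlocks C D (0 : Matrix (Fin m) (Fin n) ℂ) (1 : Matrix (Fin m) (Fin m) ℂ)))
    (a b : ℝ) (hab : a ≤ b)
    (d : ℝ → Fin m → ℂ) (hd : ContinuousOn d (Set.Icc a b))
    (x : ℝ → Fin n → ℂ)
    (hderiv : ∀ t ∈ Set.Icc a b,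
      HasDerivWithinAt x (A.mulVec (x t) + B.mulVec (d t)) (Set.Icc a b) t) :
    (star (x b) ⬝ᵥ P.mulVec (x b)).re - (star (x a) ⬝ᵥ P.mulVec (x a)).re
      + (∫ t in a..b,
          ((star (C.mulVec (x t) + D.mulVec (d t)) ⬝ᵥ (C.mulVec (x t) + D.mulVec (d t))).re
            - γ ^ 2 * (star (d t) ⬝ᵥ d t).re))
      + (∫ t in a..b,
          ((qForm Ψi Qi (A.mulVec (x t) + B.mulVec (d t)) (x t)).re
            - (qForm Ψj Qj (A.mulVec (x t) + B.mulVec (d t)) (x t)).re)) ≤ 0 := by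
  set M := ((Matrix.fromBlocks A B (1 : Matrix (Fin n) (Fin n) ℂ) (0 : Matrix (Fin n) (Fin m) ℂ))ᴴ
          * (kron2 PhiMat P + kron2 Ψi Qi - kron2 Ψj Qj)
          * Matrix.fromBlocks A B (1 : Matrix (Fin n) (Fin n) ℂ) (0 : Matrix (Fin n) (Fin m) ℂ)
        + (Matrix.fromBlocks C D (0 : Matrix (Fin m) (Fin n) ℂ) (1 : Matrix (Fin m) (Fin m) ℂ))ᴴ
            * Matrix.fromBlocks (1 : Matrix (Fin p) (Fin p) ℂ) (0 : Matrix (Fin p) (Fin m) ℂ)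
                (0 : Matrix (Fin m) (Fin p) ℂ) (-((γ : ℂ) ^ 2) • (1 : Matrix (Fin m) (Fin m) ℂ))
            * Matrix.fromBlocks C D (0 : Matrix (Fin m) (Fin n) ℂ) (1 : Matrix (Fin m) (Fin m) ℂ))
    with hMdef
  -- continuity facts
  have hx : ContinuousOn x (Set.Icc a b) := fun t ht => (hderiv t ht).continuousWithinAt
  have hu : ContinuousOn (fun t => A.mulVec (x t) + B.mulVec (d t)) (Set.Icc a b) :=
    (continuousOn_mulVec A hx).add (continuousOn_mulVec B hd)
  have hz : ContinuousOn (fun t => C.mulVec (x t) + D.mulVec (d t)) (Set.Icc a b) :=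
    (continuousOn_mulVec C hx).add (continuousOn_mulVec D hd)
  -- the three real integrands
  set G0 : ℝ → ℝ := fun t =>
    (star (A.mulVec (x t) + B.mulVec (d t)) ⬝ᵥ P.mulVec (x t)
      + star (x t) ⬝ᵥ P.mulVec (A.mulVec (x t) + B.mulVec (d t))).re with hG0def
  set G1 : ℝ → ℝ := fun t =>
    (star (C.mulVec (x t) + D.mulVec (d t)) ⬝ᵥ (C.mulVec (x t) + D.mulVec (d t))).re
      - γ ^ 2 * (star (d t) ⬝ᵥ d t).re with hG1def
  set G2 : ℝ → ℝ := fun t =>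
    (qForm Ψi Qi (A.mulVec (x t) + B.mulVec (d t)) (x t)).re
      - (qForm Ψj Qj (A.mulVec (x t) + B.mulVec (d t)) (x t)).re with hG2def
  have hqc : ∀ (Ψ : Matrix (Fin 2) (Fin 2) ℂ) (Q : Matrix (Fin n) (Fin n) ℂ),
      ContinuousOn (fun t => qForm Ψ Q (A.mulVec (x t) + B.mulVec (d t)) (x t))
        (Set.Icc a b) := by
    intro Ψ Q
    unfold qForm
    exact (((continuousOn_const.mul (continuousOn_dot Q hu hu)).add
      (continuousOn_const.mul (continuousOn_dot Q hu hx))).add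
      (continuousOn_const.mul (continuousOn_dot Q hx hu))).add
      (continuousOn_const.mul (continuousOn_dot Q hx hx))
  have hG0c : ContinuousOn G0 (Set.Icc a b) :=
    Complex.continuous_re.comp_continuousOn
      ((continuousOn_dot P hu hx).add (continuousOn_dot P hx hu))
  have hG1c : ContinuousOn G1 (Set.Icc a b) :=
    (Complex.continuous_re.comp_continuousOn (continuousOn_dot' hz)).sub
      ((continuousOn_const).mul
        (Complex.continuous_re.comp_continuousOn (continuousOn_dot' hd)))
  have hG2c : ContinuousOn G2 (Set.Icc a b) :=
    (Complex.continuous_re.comp_continuousOn (hqc Ψi Qi)).sub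
      (Complex.continuous_re.comp_continuousOn (hqc Ψj Qj))
  have huIcc : Set.uIcc a b = Set.Icc a b := Set.uIcc_of_le hab
  have hG0i : IntervalIntegrable G0 volume a b :=
    (huIcc ▸ hG0c).intervalIntegrable
  have hG1i : IntervalIntegrable G1 volume a b :=
    (huIcc ▸ hG1c).intervalIntegrable
  have hG2i : IntervalIntegrable G2 volume a b :=
    (huIcc ▸ hG2c).intervalIntegrable
  -- derivative of the storage function
  have hVd : ∀ t ∈ Set.Icc a b,
      HasDerivWithinAt (fun τ => (star (x τ) ⬝ᵥ P.mulVec (x τ)).re) (G0 t)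
        (Set.Icc a b) t := by
    intro t ht
    have h := hasDerivWithinAt_quad P (hderiv t ht)
    exact Complex.reCLM.hasFDerivAt.comp_hasDerivWithinAt t h
  have hVcont : ContinuousOn (fun τ => (star (x τ) ⬝ᵥ P.mulVec (x τ)).re) (Set.Icc a b) :=
    fun t ht => (hVd t ht).continuousWithinAt
  have hFTC : ∫ t in a..b, G0 t
      = (star (x b) ⬝ᵥ P.mulVec (x b)).re - (star (x a) ⬝ᵥ P.mulVec (x a)).re := by
    exact intervalIntegral.integral_eq_sub_of_hasDeriv_right_of_le hab hVcont
      (fun t ht => (hVd t (Set.Ioo_subset_Icc_self ht)).mono_of_mem_nhdsWithin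
        (Icc_mem_nhdsGT_of_mem ⟨ht.1.le, ht.2⟩)) hG0i
  -- pointwise inequality
  have hFle : ∀ t : ℝ, G0 t + G1 t + G2 t ≤ 0 := by
    intro t
    have hq := congrArg Complex.re (Mquad A B C D γ P Qi Qj Ψi Ψj (x t) (d t))
    rw [← hMdef] at hq
    have hle : (star (Sum.elim (x t) (d t)) ⬝ᵥ M.mulVec (Sum.elim (x t) (d t))).re ≤ 0 := by
      rcases eq_or_ne (Sum.elim (x t) (d t)) 0 with h | h
      · simp [h]
      · exact (hM.2 _ h).le
    rw [hq] at hle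
    simp only [Complex.add_re, Complex.sub_re, ← Complex.ofReal_pow,
      Complex.re_ofReal_mul] at hle
    simp only [hG0def, hG1def, hG2def, Complex.add_re]
    linarith
  -- assemble
  rw [← hFTC, ← intervalIntegral.integral_add hG0i hG1i,
    ← intervalIntegral.integral_add (hG0i.add hG1i) hG2i]
  have hmono := intervalIntegral.integral_mono_on (f := fun t => G0 t + G1 t + G2 t)
    (g := fun _ => (0 : ℝ)) (μ := volume) hab ((hG0i.add hG1i).add hG2i)
    intervalIntegrable_const (fun t _ => hFle t)
  simpa using hmono
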